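/- Let N be a monotone Boolean automata network of size n with no non-sequentialisable transitions of size smaller than n, and let x ⇒ y = x̄^V be a non-sequentialisable transition such that y is stable (U(y) = ∅). Then y has empty asynchronous basin: no configuration z ≠ y satisfies z ⇝ y asynchronously. Moreover every automaton i ∈ V carries a positive loop (i,i) with sign +1 in the interaction graph. -/

import Mathlib

/-!
Every transition of size `< n` is sequentialisable, so by induction on the size every
elementary transition of size `< n` is realised by an asynchronous derivation; in particular
`x ⇝ ȳ^i` for each `i`. If some `i` were unstable in `ȳ^i`, the step `ȳ^i → y` would give
`x ⇝ y`, sequentialising `x ⇒ y`. Hence every `i` is stable in `ȳ^i`. The only candidates for an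
asynchronous predecessor of `y` are the `ȳ^i`, so the basin of `y` is empty; and `i` being
stable both in `y` and in `ȳ^i` means `f i` follows `z_i` there, which local monotonicity
turns into a positive loop on `i`.
-/

namespace BAN

/-- A configuration of a Boolean automata network of size `n`. -/
abbrev Config (n : ℕ) := Fin n → Bool

/-- `s(b) = 2b - 1 ∈ {-1,1}`. -/
def sgn (b : Bool) : ℤ := if b then 1 else -1

/-- Boolean as integer `0/1`. -/
def bint (b : Bool) : ℤ := if b then 1 else 0

/-- `x̄^i` : `x` with coordinate `i` flipped. -/
def flip {n : ℕ} (x : Config n) (i : Fin n) : Config n := Function.update x i (!x i)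

/-- A Boolean automata network of size `n`: the family of local transition functions. -/
def Net (n : ℕ) := Fin n → Config n → Bool

/-- `f i` is positively (locally) monotone in coordinate `j`:
`s(x_j)·(f_i(x) − f_i(x̄^j)) ≥ 0` for all `x`. -/
def posIn {n : ℕ} (f : Net n) (i j : Fin n) : Prop :=
  ∀ x : Config n, 0 ≤ sgn (x j) * (bint (f i x) - bint (f i (flip x j)))

/-- `f i` is negatively (locally) monotone in coordinate `j`. -/
def negIu {n : ℕ} (f : Net n) (i j : Fin n) : Prop :=
  ∀ x : Config n, sgn (x j) * (bint (f i x) - bint (f i (flip x j))) ≤ 0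

/-- The network is (locally) monotone. -/
def MonotoneNet {n : ℕ} (f : Net n) : Prop := ∀ i j, posIn f i j ∨ negIu f i j

/-- `(j,i)` is an arc of the interaction graph: `f i` depends on coordinate `j`. -/
def arc {n : ℕ} (f : Net n) (j i : Fin n) : Prop := ∃ x, f i x ≠ f i (flip x j)

/-- The arc `(j,i)` exists and has sign `s` (`+1` or `-1`). -/
def hasSign {n : ℕ} (f : Net n) (j i : Fin n) (s : ℤ) : Prop :=
  arc f j i ∧ ((s = 1 ∧ posIn f i j) ∨ (s = -1 ∧ negIu f i j))

/-- Automaton `i` is unstable in `x`. -/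
def unstable {n : ℕ} (f : Net n) (x : Config n) (i : Fin n) : Prop := f i x ≠ x i

/-- The arc `(j,i)` is frustrated in configuration `x`: `s(x_j)·s(x_i) = − sign(j,i)`. -/
def frustrated {n : ℕ} (f : Net n) (x : Config n) (j i : Fin n) : Prop :=
  ∃ s : ℤ, hasSign f j i s ∧ sgn (x j) * sgn (x i) = -s

/-- `Δ(x,y)`: the set of coordinates where `x` and `y` differ. -/
def diff {n : ℕ} (x y : Config n) : Finset (Fin n) :=
  Finset.univ.filter fun i => x i ≠ y i

/-- `U(x)`: the set of unstable automata of `x`. -/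
def U {n : ℕ} (f : Net n) (x : Config n) : Finset (Fin n) :=
  Finset.univ.filter fun i => f i x ≠ x i

/-- Elementary transition `x → y`: `∅ ≠ Δ(x,y) ⊆ U(x)`. -/
def elemTrans {n : ℕ} (f : Net n) (x y : Config n) : Prop :=
  (diff x y).Nonempty ∧ diff x y ⊆ U f x

/-- Asynchronous (atomic) transition: flip one unstable coordinate. -/
def asyncStep {n : ℕ} (f : Net n) (x y : Config n) : Prop :=
  ∃ i, unstable f x i ∧ y = flip x i

/-- Asynchronous reachability (derivations). -/
def asyncReach {n : ℕ} (f : Net n) : Config n → Config n → Prop :=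
  Relation.ReflTransGen (asyncStep f)

/-- `x ⇒ y` is sequentialisable: there is a chain of strictly smaller elementary
transitions from `x` to `y`. -/
def seqable {n : ℕ} (f : Net n) (x y : Config n) : Prop :=
  ∃ l : List (Config n),
    l.Chain' (fun u v => elemTrans f u v ∧ (diff u v).card < (diff x y).card) ∧
    l.head? = some x ∧ l.getLast? = some y

/-- Non-sequentialisable (normal) synchronous transition. -/
def nonSeq {n : ℕ} (f : Net n) (x y : Config n) : Prop :=
  elemTrans f x y ∧ 2 ≤ (diff x y).card ∧ ¬ seqable f x y

/-- Cyclic successor on `Fin ℓ`. -/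
def cnext {ℓ : ℕ} (k : Fin ℓ) : Fin ℓ := ⟨(k.val + 1) % ℓ, Nat.mod_lt _ k.pos⟩

/-- `c : Fin ℓ → Fin n` describes a cycle of the interaction graph of `f`
(a closed walk with pairwise distinct arcs). -/
def isCycle {n : ℕ} (f : Net n) {ℓ : ℕ} (c : Fin ℓ → Fin n) : Prop :=
  0 < ℓ ∧ (∀ k, arc f (c k) (c (cnext k))) ∧
    Function.Injective (fun k => (c k, c (cnext k)))

/-- The cycle `c` is `x`-critical: all nodes unstable in `x`, all arcs frustrated in `x`. -/
def xCriticalCycle {n : ℕ} (f : Net n) (x : Config n) {ℓ : ℕ} (c : Fin ℓ → Fin n) : Prop :=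
  isCycle f c ∧ (∀ k, unstable f x (c k)) ∧ ∀ k, frustrated f x (c k) (c (cnext k))

/-- `x̄^S`: flip all coordinates of `x` in `S`. -/
def flipSet {n : ℕ} (x : Config n) (S : Finset (Fin n)) : Config n :=
  fun i => if i ∈ S then !x i else x i

/-- `x̄^V`. -/
def flipAll {n : ℕ} (x : Config n) : Config n := fun i => !x i

/-- Union of the first `t` blocks of a list of finsets. -/
def prefUnion {n : ℕ} (D : List (Finset (Fin n))) (t : ℕ) : Finset (Fin n) :=
  (D.take t).foldr (· ∪ ·) ∅

/-- `x ⇒ y` is totally sequentialisable: some ordering of `Δ(x,y)` gives a chain of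
asynchronous transitions from `x` to `y`. -/
def totallySeq {n : ℕ} (f : Net n) (x y : Config n) : Prop :=
  ∃ l : List (Fin n), l.Nodup ∧ l.toFinset = diff x y ∧
    ∀ t : Fin l.length, unstable f ((l.take t.val).foldl flip x) (l.get t)

/-- Attractor of the asynchronous transition graph: nonempty, closed, strongly
connected set of configurations (terminal SCC). -/
def isAttractor {n : ℕ} (f : Net n) (A : Set (Config n)) : Prop :=
  A.Nonempty ∧ (∀ a ∈ A, ∀ b, asyncStep f a b → b ∈ A) ∧
    ∀ a ∈ A, ∀ b ∈ A, asyncReach f a b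

/-- A configuration is transient if it belongs to no attractor. -/
def transientCfg {n : ℕ} (f : Net n) (z : Config n) : Prop :=
  ¬ ∃ A : Set (Config n), isAttractor f A ∧ z ∈ A

open Relation

theorem reflTransGen_iff_exists_isChain {α : Type*} {r : α → α → Prop} {a b : α} :
    ReflTransGen r a b ↔ ∃ l : List α, l.IsChain r ∧ l.head? = some a ∧ l.getLast? = some b := by
  constructor
  · intro h
    obtain ⟨l, hl, hchain, rfl, rfl⟩ := List.exists_isChain_ne_nil_of_relationReflTransGen h
    exact ⟨l, hchain, List.head?_eq_some_head hl, List.getLast?_eq_some_getLast hl⟩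
  · rintro ⟨l, hchain, hhead, hlast⟩
    have hl : l ≠ [] := by rintro rfl; cases hhead
    rw [List.head?_eq_some_head hl, Option.some_inj] at hhead
    rw [List.getLast?_eq_some_getLast hl, Option.some_inj] at hlast
    exact hhead ▸ hlast ▸ List.relationReflTransGen_of_exists_isChain l hchain hl

variable {n : ℕ}

@[simp]
theorem flip_apply_self (u : Config n) (i : Fin n) : flip u i i = !u i := by
  simp [flip]

theorem flip_apply_of_ne (u : Config n) {i j : Fin n} (h : j ≠ i) : flip u i j = u j := by
  simp [flip, h]

@[simp]
theorem flip_flip (u : Config n) (i : Fin n) : flip (flip u i) i = u := by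
  funext j
  by_cases h : j = i
  · subst h; simp
  · simp [flip_apply_of_ne _ h]

theorem diff_flip (u : Config n) (i : Fin n) : diff u (flip u i) = {i} := by
  ext j
  by_cases h : j = i
  · subst h; simp [diff]
  · simp [diff, flip_apply_of_ne _ h, h]

theorem eq_flip_of_diff_eq_singleton {u v : Config n} {i : Fin n} (h : diff u v = {i}) :
    v = flip u i := by
  have hmem : ∀ j, u j ≠ v j ↔ j = i := fun j => by
    simpa [diff] using Finset.ext_iff.mp h j
  funext j
  by_cases hj : j = i
  · subst hj; simpa using Bool.eq_not_of_ne ((hmem j).mpr rfl).symm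
  · rw [flip_apply_of_ne _ hj]; simpa [eq_comm] using mt (hmem j).mp hj

theorem diff_flip_flipAll (x : Config n) (i : Fin n) :
    diff x (flip (flipAll x) i) = Finset.univ.erase i := by
  ext j
  by_cases h : j = i
  · subst h; simp [diff, flipAll]
  · simp [diff, flipAll, flip_apply_of_ne _ h, h]

theorem diff_flipAll (x : Config n) : diff x (flipAll x) = Finset.univ := by
  ext j; simp [diff, flipAll]

section

variable (f : Net n)

theorem asyncStep_iff {u v : Config n} :
    asyncStep f u v ↔ elemTrans f u v ∧ (diff u v).card = 1 := by
  constructor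
  · rintro ⟨i, hi, rfl⟩
    rw [elemTrans, diff_flip]
    simpa [U, unstable] using hi
  · rintro ⟨⟨-, hU⟩, hcard⟩
    obtain ⟨i, hi⟩ := Finset.card_eq_one.mp hcard
    refine ⟨i, ?_, eq_flip_of_diff_eq_singleton hi⟩
    simpa [U, unstable] using hU (hi ▸ Finset.mem_singleton_self i)

theorem seqable_of_asyncReach {x y : Config n} (h : asyncReach f x y)
    (h2 : 2 ≤ (diff x y).card) : seqable f x y := by
  obtain ⟨l, hchain, hhead, hlast⟩ := reflTransGen_iff_exists_isChain.mp h
  refine ⟨l, hchain.imp fun u v huv => ?_, hhead, hlast⟩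
  obtain ⟨he, hcard⟩ := (asyncStep_iff f).mp huv
  exact ⟨he, by omega⟩

theorem asyncReach_of_elemTrans (m : ℕ) (hsize : ∀ u v, nonSeq f u v → m ≤ (diff u v).card)
    {u v : Config n} (he : elemTrans f u v) (hlt : (diff u v).card < m) : asyncReach f u v := by
  induction hk : (diff u v).card using Nat.strong_induction_on generalizing u v with
  | _ k ih =>
    subst hk
    by_cases h1 : (diff u v).card = 1
    · exact ReflTransGen.single ((asyncStep_iff f).mpr ⟨he, h1⟩)
    have h2 : 2 ≤ (diff u v).card := by
      have := Finset.card_pos.mpr he.1; omega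
    have hseq : seqable f u v := by
      by_contra hseq
      exact absurd (hsize u v ⟨he, h2, hseq⟩) (by omega)
    obtain ⟨l, hchain, hhead, hlast⟩ := hseq
    have hsteps := reflTransGen_iff_exists_isChain.mpr ⟨l, hchain, hhead, hlast⟩
    exact reflTransGen_closed (fun a b hab => ih _ hab.2 hab.1 (by omega) rfl) u v hsteps

theorem not_unstable_flip_flipAll (hsize : ∀ u v, nonSeq f u v → n ≤ (diff u v).card)
    {x : Config n} (hns : nonSeq f x (flipAll x)) (i : Fin n) :
    ¬ unstable f (flip (flipAll x) i) i := by
  intro hi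
  obtain ⟨⟨-, hU⟩, h2, hnseq⟩ := hns
  have hn : (diff x (flipAll x)).card = n := by simp [diff_flipAll]
  have hcard : (diff x (flip (flipAll x) i)).card = n - 1 := by
    simp [diff_flip_flipAll, Finset.card_erase_of_mem]
  have he : elemTrans f x (flip (flipAll x) i) :=
    ⟨Finset.card_pos.mp (by omega), (Finset.subset_univ _).trans (diff_flipAll x ▸ hU)⟩
  have hreach : asyncReach f x (flip (flipAll x) i) :=
    asyncReach_of_elemTrans f n hsize he (by omega)
  exact hnseq (seqable_of_asyncReach f (hreach.tail ⟨i, hi, (flip_flip _ i).symm⟩) h2)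

theorem eq_of_asyncReach_of_not_unstable_flip {y z : Config n}
    (hflip : ∀ i, ¬ unstable f (flip y i) i) (h : asyncReach f z y) : z = y := by
  rcases h.cases_tail with rfl | ⟨c, -, i, hi, rfl⟩
  · rfl
  · exact absurd (by simpa using hi) (hflip i)

theorem arc_self_and_posIn_of_not_unstable {i : Fin n} (hmono : posIn f i i ∨ negIu f i i)
    {z : Config n} (hz : ¬ unstable f z i) (hflip : ¬ unstable f (flip z i) i) :
    arc f i i ∧ posIn f i i := by
  have hz : f i z = z i := not_not.mp hz
  have hflip : f i (flip z i) = !z i := by simpa using not_not.mp hflip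
  refine ⟨⟨z, by simp [hz, hflip]⟩, hmono.resolve_right fun hneg => ?_⟩
  have := hneg z
  rw [hz, hflip] at this
  cases hzi : z i <;> simp [hzi, sgn, bint] at this

end

/-- if `N` has no non-sequentialisable transition of size `< n`,
`x ⇒ y = x̄^V` is non-sequentialisable and `y` is stable, then `y` has empty
asynchronous basin and every automaton bears a positive loop. -/
theorem stmt12 {n : ℕ} (f : Net n) (hmono : MonotoneNet f)
    (hsize : ∀ u v, nonSeq f u v → n ≤ (diff u v).card)
    (x y : Config n) (hy : y = flipAll x) (hns : nonSeq f x y)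
    (hstable : ∀ i, f i y = y i) :
    (∀ z : Config n, z ≠ y → ¬ asyncReach f z y) ∧
    (∀ i : Fin n, arc f i i ∧ posIn f i i) := by
  subst hy
  have hflip := not_unstable_flip_flipAll f hsize hns
  exact ⟨fun z hz h => hz (eq_of_asyncReach_of_not_unstable_flip f hflip h),
    fun i => arc_self_and_posIn_of_not_unstable f (hmono i i) (not_not.mpr (hstable i)) (hflip i)⟩

end BAN
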